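/- In Sweedler's Hopf algebra H₄ over ℂ with cointegral λ_t (λ_t(gx)=t, zero on 1,g,x) and γ_s as above, the pairing condition (λ_t ⊗ (λ_t∘S))(γ_s) = ½ t² s holds; hence the normalisation (λ_t⊗(λ_t∘S))(γ_s) = 1 is equivalent to t² s = 2. -/

import Mathlib

open TensorProduct

theorem sweedler_gamma_normalisation_general
    (H : Type*) [Ring H] [Algebra ℂ H]
    (g x : H)
    (S : H →ₗ[ℂ] H)
    (hS1 : S 1 = 1) (hSg : S g = g) (hSx : S x = g * x) (hSgx : S (g * x) = -x)
    (t s : ℂ)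
    (lam : H →ₗ[ℂ] ℂ)
    (hlam1 : lam 1 = 0) (hlamg : lam g = 0) (hlamx : lam x = 0) (hlamgx : lam (g * x) = t)
    (γ : H ⊗[ℂ] H)
    (hγ : γ = (2 : ℂ)⁻¹ •
        ((1 : H) ⊗ₜ[ℂ] (1 : H) + (1 : H) ⊗ₜ[ℂ] g + g ⊗ₜ[ℂ] (1 : H) - g ⊗ₜ[ℂ] g)
      + (s / 2) •
        (x ⊗ₜ[ℂ] x + x ⊗ₜ[ℂ] (g * x) + (g * x) ⊗ₜ[ℂ] x - (g * x) ⊗ₜ[ℂ] (g * x))) :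
    (TensorProduct.lid ℂ ℂ) (TensorProduct.map lam (lam ∘ₗ S) γ) = t ^ 2 * s / 2 ∧
    ((TensorProduct.lid ℂ ℂ) (TensorProduct.map lam (lam ∘ₗ S) γ) = 1 ↔ t ^ 2 * s = 2) := by
  have pairing : TensorProduct.lid ℂ ℂ (TensorProduct.map lam (lam ∘ₗ S) γ) = t ^ 2 * s / 2 := by
    subst hγ
    simp only [map_add, map_sub, map_smul, TensorProduct.map_tmul, LinearMap.comp_apply,
      hS1, hSg, hSx, hSgx, map_neg, hlam1, hlamg, hlamx, hlamgx, TensorProduct.lid_tmul,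
      smul_eq_mul]
    ring
  exact ⟨pairing, pairing ▸ div_eq_one_iff_eq two_ne_zero⟩

/-- In Sweedler's Hopf algebra `H₄` over `ℂ` with cointegral `λ_t`
(`λ_t (gx) = t`, vanishing on `1, g, x`) and `γ_s` as before, the pairing satisfies
`(λ_t ⊗ (λ_t ∘ S)) γ_s = ½ t² s`; hence the normalisation `(λ_t ⊗ (λ_t ∘ S)) γ_s = 1`
is equivalent to `t² s = 2`. -/
theorem sweedler_gamma_normalisation
    (H : Type*) [Ring H] [Algebra ℂ H]
    (g x : H)
    (hgg : g * g = 1) (hxx : x * x = 0) (hxg : x * g = -(g * x))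
    (B : Module.Basis (Fin 4) ℂ H)
    (hB0 : B 0 = 1) (hB1 : B 1 = g) (hB2 : B 2 = x) (hB3 : B 3 = g * x)
    (S : H →ₗ[ℂ] H)
    (hS1 : S 1 = 1) (hSg : S g = g) (hSx : S x = g * x) (hSgx : S (g * x) = -x)
    (t s : ℂ)
    (lam : H →ₗ[ℂ] ℂ)
    (hlam1 : lam 1 = 0) (hlamg : lam g = 0) (hlamx : lam x = 0) (hlamgx : lam (g * x) = t)
    (γ : H ⊗[ℂ] H)
    (hγ : γ = (2 : ℂ)⁻¹ •
        ((1 : H) ⊗ₜ[ℂ] (1 : H) + (1 : H) ⊗ₜ[ℂ] g + g ⊗ₜ[ℂ] (1 : H) - g ⊗ₜ[ℂ] g)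
      + (s / 2) •
        (x ⊗ₜ[ℂ] x + x ⊗ₜ[ℂ] (g * x) + (g * x) ⊗ₜ[ℂ] x - (g * x) ⊗ₜ[ℂ] (g * x))) :
    (TensorProduct.lid ℂ ℂ) (TensorProduct.map lam (lam ∘ₗ S) γ) = t ^ 2 * s / 2 ∧
    ((TensorProduct.lid ℂ ℂ) (TensorProduct.map lam (lam ∘ₗ S) γ) = 1 ↔ t ^ 2 * s = 2) :=
  sweedler_gamma_normalisation_general H g x S hS1 hSg hSx hSgx t s lam hlam1 hlamg hlamx hlamgx γ
    hγ
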